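/- arXiv:1312.4203 — 4 statements merged into one kernel-verified Lean document; each statement's English description precedes it below -/
import Mathlib

section
/- Suppose each job j has Map completion time C_j^M in schedule σ_M and Reduce completion time C_j^R in schedule σ_R, and define its width ω_j = max{C_j^M, C_j^R}. In the merged schedule produced by MR-scheduling, every Map task of job j completes by time ω_j and every Reduce task of job j completes by time 2·ω_j. Consequently the completion time of job j in the merged schedule is at most 2·max{C_j^M, C_j^R}. -/
open MeasureTheory

lemma cover_sum {α : Type*} (S : Finset α) (a b : ℝ) (f g : α → ℝ) (hg : ∀ i, 0 ≤ g i)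
    (cover : ∀ x, a ≤ x → x < b → ∃ i ∈ S, f i ≤ x ∧ x < f i + g i) :
    b - a ≤ ∑ i ∈ S, g i := by
  rcases le_or_gt b a with h | h
  · have : (0:ℝ) ≤ ∑ i ∈ S, g i := Finset.sum_nonneg (fun i _ => hg i)
    linarith
  have hsub : Set.Ico a b ⊆ ⋃ i ∈ S, Set.Ico (f i) (f i + g i) := by
    intro x hx
    rcases cover x hx.1 hx.2 with ⟨i, hi, h1, h2⟩
    exact Set.mem_biUnion hi ⟨h1, h2⟩
  have hm := (measure_mono (μ := volume) hsub).trans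
    (measure_biUnion_finset_le (μ := volume) S _)
  simp only [Real.volume_Ico, add_sub_cancel_left] at hm
  have hsum : ∑ i ∈ S, ENNReal.ofReal (g i) = ENNReal.ofReal (∑ i ∈ S, g i) :=
    (ENNReal.ofReal_sum_of_nonneg (fun i _ => hg i)).symm
  rw [hsum] at hm
  have := (ENNReal.ofReal_le_ofReal_iff (Finset.sum_nonneg (fun i _ => hg i))).mp hm
  linarith


/-- In the merged MR-schedule (widths ω_j = max{C_j^M, C_j^R}; Map processors run,
whenever free, the smallest-width unscheduled Map task; Reduce processors run, among
Reduce tasks released at their width, the smallest-width one; the total volume of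
tasks of width ≤ ω on any processor is ≤ ω), every Map task of job j completes by
ω_j, every Reduce task of job j completes by 2·ω_j, and hence the completion time
of every job is at most 2·max{C_j^M, C_j^R}. -/
theorem merged_schedule_bound
    (Job MapT RedT ProcM ProcR : Type*) [Fintype MapT] [Fintype RedT]
    [DecidableEq ProcM] [DecidableEq ProcR]
    (jm : MapT → Job) (jr : RedT → Job)
    (CM CR : Job → ℝ) (ω : Job → ℝ)
    (hω : ∀ j, ω j = max (CM j) (CR j))
    (procM : MapT → ProcM) (procR : RedT → ProcR)
    (pM : MapT → ℝ) (pR : RedT → ℝ)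
    (hpM : ∀ T, 0 ≤ pM T) (hpR : ∀ T, 0 ≤ pR T)
    (SM : MapT → ℝ) (SR : RedT → ℝ)
    (hSM0 : ∀ T, 0 ≤ SM T)
    -- on Map processors, before a Map task T starts the processor is busy
    -- with Map tasks of width at most ω (jm T)
    (hbusyM : ∀ (T : MapT) (x : ℝ), 0 ≤ x → x < SM T →
      ∃ T', procM T' = procM T ∧ ω (jm T') ≤ ω (jm T) ∧
        SM T' ≤ x ∧ x < SM T' + pM T')
    -- the total Map volume of width ≤ ω (jm T) on any Map processor is ≤ ω (jm T)
    (hvolM : ∀ T : MapT,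
      ∑ T' ∈ Finset.univ.filter
        (fun T' => procM T' = procM T ∧ ω (jm T') ≤ ω (jm T)), pM T' ≤ ω (jm T))
    -- each Reduce task is released at time ω of its job
    (hrelR : ∀ T : RedT, ω (jr T) ≤ SR T)
    -- on Reduce processors, between the release of T and its start the processor
    -- is busy with Reduce tasks of width at most ω (jr T)
    (hbusyR : ∀ (T : RedT) (x : ℝ), ω (jr T) ≤ x → x < SR T →
      ∃ T', procR T' = procR T ∧ ω (jr T') ≤ ω (jr T) ∧
        SR T' ≤ x ∧ x < SR T' + pR T')
    (hvolR : ∀ T : RedT,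
      ∑ T' ∈ Finset.univ.filter
        (fun T' => procR T' = procR T ∧ ω (jr T') ≤ ω (jr T)), pR T' ≤ ω (jr T)) :
    (∀ T : MapT, SM T + pM T ≤ ω (jm T)) ∧
    (∀ T : RedT, SR T + pR T ≤ 2 * ω (jr T)) ∧
    (∀ (j : Job) (T : RedT), jr T = j → SR T + pR T ≤ 2 * max (CM j) (CR j)) := by
  
  classical
  have hωnM : ∀ T : MapT, 0 ≤ ω (jm T) := fun T => by
    have h := hvolM T
    have : 0 ≤ ∑ T' ∈ Finset.univ.filter
        (fun T' => procM T' = procM T ∧ ω (jm T') ≤ ω (jm T)), pM T' :=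
      Finset.sum_nonneg (fun i _ => hpM i)
    linarith
  have mapBound : ∀ T : MapT, SM T + pM T ≤ ω (jm T) := by
    intro T
    set F := Finset.univ.filter
        (fun T' => procM T' = procM T ∧ ω (jm T') ≤ ω (jm T)) with hF
    have hTF : T ∈ F := by simp [hF]
    have hcov : ∀ x, (0:ℝ) ≤ x → x < SM T →
        ∃ i ∈ F.erase T, SM i ≤ x ∧ x < SM i + pM i := by
      intro x hx hxlt
      rcases hbusyM T x hx hxlt with ⟨T', h1, h2, h3, h4⟩
      refine ⟨T', Finset.mem_erase.mpr ⟨?_, by simp [hF, h1, h2]⟩, h3, h4⟩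
      rintro rfl; linarith
    have h1 : SM T - 0 ≤ ∑ i ∈ F.erase T, pM i :=
      cover_sum (F.erase T) 0 (SM T) SM pM hpM hcov
    have h2 : ∑ i ∈ F.erase T, pM i + pM T = ∑ i ∈ F, pM i :=
      Finset.sum_erase_add F pM hTF
    have h3 := hvolM T
    rw [← hF] at h3
    linarith
  have redBound : ∀ T : RedT, SR T + pR T ≤ 2 * ω (jr T) := by
    intro T
    set F := Finset.univ.filter
        (fun T' => procR T' = procR T ∧ ω (jr T') ≤ ω (jr T)) with hF
    have hTF : T ∈ F := by simp [hF]
    have hcov : ∀ x, ω (jr T) ≤ x → x < SR T →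
        ∃ i ∈ F.erase T, SR i ≤ x ∧ x < SR i + pR i := by
      intro x hx hxlt
      rcases hbusyR T x hx hxlt with ⟨T', h1, h2, h3, h4⟩
      refine ⟨T', Finset.mem_erase.mpr ⟨?_, by simp [hF, h1, h2]⟩, h3, h4⟩
      rintro rfl; linarith
    have h1 : SR T - ω (jr T) ≤ ∑ i ∈ F.erase T, pR i :=
      cover_sum (F.erase T) (ω (jr T)) (SR T) SR pR hpR hcov
    have h2 : ∑ i ∈ F.erase T, pR i + pR T = ∑ i ∈ F, pR i :=
      Finset.sum_erase_add F pR hTF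
    have h3 := hvolR T
    rw [← hF] at h3
    linarith
  refine ⟨mapBound, redBound, ?_⟩
  intro j T hT
  have := redBound T
  rw [hT, hω j] at this
  exact this
end

section
/- Consider a single-processor nonpreemptive schedule containing a Reduce task T with completion time C and a set s of Shuffle tasks, each of which must complete before T starts. The modified schedule that keeps C fixed and reschedules the tasks of s consecutively immediately before T (in arbitrary order), shifting earlier tasks only leftward, is feasible and weakly decreases the completion time of every other task. Hence there is an optimal schedule in which for every Reduce task all of its Shuffle tasks are executed consecutively ending exactly when the Reduce task starts. -/
/-!
Delete the Shuffle tasks `s` from the schedule and slide every task that starts before `T0` to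
the left by the total length of the deleted tasks finished by its start. Since non-overlapping
tasks inside an interval have total length at most its length, this keeps the order of the
remaining tasks and frees the window of length `∑ u ∈ s, p u` ending at `S T0`, into which the
tasks of `s` are then placed back to back. Tasks starting at or after `T0` do not move.
-/

open MeasureTheory Finset

section Packing

variable {T : Type*}

def NoOverlap (p S : T → ℝ) (t1 t2 : T) : Prop :=
  S t1 + p t1 ≤ S t2 ∨ S t2 + p t2 ≤ S t1

variable {p S : T → ℝ}

theorem NoOverlap.add_le_of_lt {t1 t2 : T} (hp : 0 ≤ p t2) (h : NoOverlap p S t1 t2)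
    (hlt : S t1 < S t2) : S t1 + p t1 ≤ S t2 :=
  h.resolve_right fun h' => by linarith

theorem sum_le_of_pairwise_noOverlap {F : Finset T} {a L : ℝ} (haL : a ≤ L)
    (hp : ∀ t ∈ F, 0 ≤ p t) (hno : (F : Set T).Pairwise (NoOverlap p S))
    (hin : ∀ t ∈ F, a ≤ S t ∧ S t + p t ≤ L) :
    ∑ t ∈ F, p t ≤ L - a := by
  have hdisj : (F : Set T).PairwiseDisjoint fun t => Set.Ico (S t) (S t + p t) := by
    intro t1 h1 t2 h2 hne
    rw [Function.onFun, Set.Ico_disjoint_Ico]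
    rcases hno h1 h2 hne with h | h
    · exact min_le_of_left_le (h.trans (le_max_right _ _))
    · exact min_le_of_right_le (h.trans (le_max_left _ _))
  have hsub : (⋃ t ∈ F, Set.Ico (S t) (S t + p t)) ⊆ Set.Ico a L :=
    Set.iUnion₂_subset fun t ht => Set.Ico_subset_Ico (hin t ht).1 (hin t ht).2
  have hvol := measure_mono (μ := volume) hsub
  rw [measure_biUnion_finset hdisj (fun _ _ => measurableSet_Ico), Real.volume_Ico] at hvol
  simp_rw [Real.volume_Ico, add_sub_cancel_left] at hvol
  rwa [← ENNReal.ofReal_sum_of_nonneg hp, ENNReal.ofReal_le_ofReal_iff (sub_nonneg.2 haL)] at hvol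

theorem exists_consecutive_placement (s : Finset T) (hp : ∀ t ∈ s, 0 ≤ p t) :
    ∃ σ : T → ℝ, (∀ t ∈ s, 0 ≤ σ t ∧ σ t + p t ≤ ∑ u ∈ s, p u) ∧
      (s : Set T).Pairwise (NoOverlap p σ) := by
  classical
  induction s using Finset.induction_on with
  | empty => exact ⟨0, by simp, by simp⟩
  | insert a s ha ih =>
    obtain ⟨σ, hin, hno⟩ := ih fun t ht => hp t (mem_insert_of_mem ht)
    have hs : 0 ≤ ∑ u ∈ s, p u := sum_nonneg fun t ht => hp t (mem_insert_of_mem ht)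
    have hpa := hp a (mem_insert_self a s)
    have hne : ∀ t ∈ s, t ≠ a := fun t ht h => ha (h ▸ ht)
    refine ⟨Function.update σ a (∑ u ∈ s, p u), ?_, ?_⟩
    · simp only [forall_mem_insert, sum_insert ha, Function.update_self]
      refine ⟨⟨hs, by linarith⟩, fun t ht => ?_⟩
      rw [Function.update_of_ne (hne t ht)]
      constructor <;> linarith [hin t ht]
    · rw [coe_insert]
      rintro t1 (rfl | h1) t2 (rfl | h2) h12
      · exact absurd rfl h12
      · simp [NoOverlap, Function.update_of_ne (hne t2 h2), (hin t2 h2).2]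
      · simp [NoOverlap, Function.update_of_ne (hne t1 h1), (hin t1 h1).2]
      · simpa [NoOverlap, Function.update_of_ne (hne t1 h1), Function.update_of_ne (hne t2 h2)]
          using hno h1 h2 h12

end Packing

section Compaction

variable {T : Type*} (p S : T → ℝ) (s : Finset T)

noncomputable def removedLoad (x : ℝ) : ℝ := ∑ u ∈ s with S u + p u ≤ x, p u

/-- The start of `t` once the tasks of `s` are deleted and everything after them slides left. -/
noncomputable def compacted (t : T) : ℝ := S t - removedLoad p S s (S t)

variable {p S s}

theorem compacted_le (hp : ∀ t, 0 ≤ p t) (t : T) : compacted p S s t ≤ S t :=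
  sub_le_self _ (sum_nonneg fun u _ => hp u)

theorem compacted_eq_of_forall_add_le {t : T} (h : ∀ u ∈ s, S u + p u ≤ S t) :
    compacted p S s t = S t - ∑ u ∈ s, p u := by
  rw [compacted, removedLoad, filter_true_of_mem h]

theorem compacted_nonneg (hp : ∀ t, 0 ≤ p t) (hno : Pairwise (NoOverlap p S))
    (hS0 : ∀ t, 0 ≤ S t) (t : T) : 0 ≤ compacted p S s t := by
  have := sum_le_of_pairwise_noOverlap (F := s.filter fun u => S u + p u ≤ S t)
    (hS0 t) (fun u _ => hp u) (hno.set_pairwise _) fun u hu => ⟨hS0 u, (mem_filter.1 hu).2⟩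
  rw [compacted, removedLoad]
  linarith

/-- The tasks of `s` finishing between `t1` and `t2` fit in the gap between them, so sliding
left preserves the order. -/
theorem compacted_add_le_of_add_le (hp : ∀ t, 0 ≤ p t) (hno : Pairwise (NoOverlap p S))
    {t1 t2 : T} (ht1 : t1 ∉ s) (h : S t1 + p t1 ≤ S t2) :
    compacted p S s t1 + p t1 ≤ compacted p S s t2 := by
  set F := s.filter fun u => S u + p u ≤ S t2
  have hF : removedLoad p S s (S t2) = ∑ u ∈ F, p u := rfl
  have hbefore : ∑ u ∈ F with S u + p u ≤ S t1, p u ≤ removedLoad p S s (S t1) :=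
    sum_le_sum_of_subset_of_nonneg (filter_subset_filter _ (filter_subset _ s)) fun u _ _ => hp u
  have hbetween : ∑ u ∈ F with ¬S u + p u ≤ S t1, p u ≤ S t2 - (S t1 + p t1) := by
    refine sum_le_of_pairwise_noOverlap h (fun u _ => hp u) (hno.set_pairwise _) ?_
    intro u hu
    simp only [F, mem_filter] at hu
    obtain ⟨⟨hus, hu2⟩, hu1⟩ := hu
    exact ⟨(@hno u t1 fun h => ht1 (h ▸ hus)).resolve_left hu1, hu2⟩
  have hsplit := sum_filter_add_sum_filter_not F (fun u => S u + p u ≤ S t1) p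
  rw [compacted, compacted]
  linarith

end Compaction

section Rearrangement

variable {T : Type*} (p S : T → ℝ) (s : Finset T)

noncomputable def rearranged (T0 : T) (σ : T → ℝ) (t : T) : ℝ :=
  open Classical in
  if t ∈ s then S T0 - ∑ u ∈ s, p u + σ t
  else if S t < S T0 then compacted p S s t else S t

variable {p S s} {T0 : T} {σ : T → ℝ}

theorem rearranged_of_mem {t : T} (ht : t ∈ s) :
    rearranged p S s T0 σ t = S T0 - ∑ u ∈ s, p u + σ t := by
  simp [rearranged, ht]

theorem rearranged_of_lt {t : T} (ht : t ∉ s) (hlt : S t < S T0) :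
    rearranged p S s T0 σ t = compacted p S s t := by
  simp [rearranged, ht, hlt]

theorem rearranged_of_le {t : T} (ht : t ∉ s) (hle : S T0 ≤ S t) :
    rearranged p S s T0 σ t = S t := by
  simp [rearranged, ht, hle.not_gt]

theorem rearranged_le (hp : ∀ t, 0 ≤ p t) {t : T} (ht : t ∉ s) :
    rearranged p S s T0 σ t ≤ S t := by
  rcases lt_or_ge (S t) (S T0) with hlt | hle
  · exact (rearranged_of_lt ht hlt).trans_le (compacted_le hp t)
  · exact (rearranged_of_le ht hle).le

theorem rearranged_mem_window (hσ : ∀ t ∈ s, 0 ≤ σ t ∧ σ t + p t ≤ ∑ u ∈ s, p u) {t : T}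
    (ht : t ∈ s) :
    S T0 - ∑ u ∈ s, p u ≤ rearranged p S s T0 σ t ∧ rearranged p S s T0 σ t + p t ≤ S T0 := by
  rw [rearranged_of_mem ht]
  constructor <;> linarith [hσ t ht]

theorem rearranged_add_le_of_lt (hp : ∀ t, 0 ≤ p t) (hno : Pairwise (NoOverlap p S))
    (hshuffle : ∀ t ∈ s, S t + p t ≤ S T0) {t : T} (ht : t ∉ s) (hlt : S t < S T0) :
    rearranged p S s T0 σ t + p t ≤ S T0 - ∑ u ∈ s, p u := by
  rw [rearranged_of_lt ht hlt, ← compacted_eq_of_forall_add_le hshuffle]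
  exact compacted_add_le_of_add_le hp hno ht
    ((hno (ne_of_apply_ne S hlt.ne)).add_le_of_lt (hp T0) hlt)

theorem rearranged_nonneg (hp : ∀ t, 0 ≤ p t) (hno : Pairwise (NoOverlap p S))
    (hS0 : ∀ t, 0 ≤ S t) (hshuffle : ∀ t ∈ s, S t + p t ≤ S T0)
    (hσ : ∀ t ∈ s, 0 ≤ σ t ∧ σ t + p t ≤ ∑ u ∈ s, p u) (t : T) :
    0 ≤ rearranged p S s T0 σ t := by
  by_cases ht : t ∈ s
  · have hwindow : 0 ≤ S T0 - ∑ u ∈ s, p u :=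
      compacted_eq_of_forall_add_le hshuffle ▸ compacted_nonneg hp hno hS0 T0
    exact hwindow.trans (rearranged_mem_window hσ ht).1
  rcases lt_or_ge (S t) (S T0) with hlt | hle
  · exact rearranged_of_lt ht hlt ▸ compacted_nonneg hp hno hS0 t
  · exact rearranged_of_le ht hle ▸ hS0 t

theorem pairwise_noOverlap_rearranged (hp : ∀ t, 0 ≤ p t) (hno : Pairwise (NoOverlap p S))
    (hshuffle : ∀ t ∈ s, S t + p t ≤ S T0)
    (hσ : ∀ t ∈ s, 0 ≤ σ t ∧ σ t + p t ≤ ∑ u ∈ s, p u)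
    (hσno : (s : Set T).Pairwise (NoOverlap p σ)) :
    Pairwise (NoOverlap p (rearranged p S s T0 σ)) := by
  intro t1 t2 hne
  have hPs : S T0 - ∑ u ∈ s, p u ≤ S T0 := sub_le_self _ (sum_nonneg fun u _ => hp u)
  have hregion : ∀ t, (t ∉ s ∧ S t < S T0) ∨ t ∈ s ∨ (t ∉ s ∧ S T0 ≤ S t) := by
    intro t
    by_cases ht : t ∈ s
    · exact Or.inr (Or.inl ht)
    · exact (lt_or_ge (S t) (S T0)).imp (⟨ht, ·⟩) (Or.inr ⟨ht, ·⟩)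
  have early := fun {t} => rearranged_add_le_of_lt (σ := σ) hp hno hshuffle (t := t)
  have window := fun {t} => rearranged_mem_window (T0 := T0) (S := S) hσ (t := t)
  have late := fun {t} =>
    rearranged_of_le (p := p) (S := S) (s := s) (T0 := T0) (σ := σ) (t := t)
  rcases hregion t1 with ⟨h1, h1'⟩ | h1 | ⟨h1, h1'⟩ <;>
    rcases hregion t2 with ⟨h2, h2'⟩ | h2 | ⟨h2, h2'⟩
  · rw [NoOverlap, rearranged_of_lt h1 h1', rearranged_of_lt h2 h2']
    exact (hno hne).imp (compacted_add_le_of_add_le hp hno h1)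
      (compacted_add_le_of_add_le hp hno h2)
  · exact Or.inl (by linarith [early h1 h1', (window h2).1])
  · exact Or.inl (by linarith [early h1 h1', late h2 h2'])
  · exact Or.inr (by linarith [early h2 h2', (window h1).1])
  · simpa [NoOverlap, rearranged_of_mem h1, rearranged_of_mem h2, add_assoc] using hσno h1 h2 hne
  · exact Or.inl (by linarith [(window h1).2, late h2 h2'])
  · exact Or.inr (by linarith [early h2 h2', late h1 h1'])
  · exact Or.inr (by linarith [(window h2).2, late h1 h1'])
  · rw [NoOverlap, rearranged_of_le h1 h1', rearranged_of_le h2 h2']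
    exact hno hne

end Rearrangement

theorem shuffle_rearrangement_general (T : Type*)
    (p : T → ℝ) (hp : ∀ t, 0 ≤ p t)
    (T0 : T) (s : Finset T) (hT0 : T0 ∉ s)
    (S : T → ℝ) (hS0 : ∀ t, 0 ≤ S t)
    (hnonoverlap : ∀ t1 t2, t1 ≠ t2 → S t1 + p t1 ≤ S t2 ∨ S t2 + p t2 ≤ S t1)
    -- each Shuffle task of T0 completes before T0 starts
    (hshuffle : ∀ t ∈ s, S t + p t ≤ S T0) :
    ∃ S' : T → ℝ,
      (∀ t, 0 ≤ S' t) ∧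
      (∀ t1 t2, t1 ≠ t2 → S' t1 + p t1 ≤ S' t2 ∨ S' t2 + p t2 ≤ S' t1) ∧
      -- the completion time of T0 is kept fixed
      S' T0 + p T0 = S T0 + p T0 ∧
      -- the Shuffle tasks of s run consecutively, ending exactly when T0 starts
      (∀ t ∈ s, S' T0 - (∑ u ∈ s, p u) ≤ S' t ∧ S' t + p t ≤ S' T0) ∧
      (∀ t ∈ s, S' t + p t ≤ S' T0) ∧
      -- every other task's completion time weakly decreases
      (∀ t, t ∉ s → S' t + p t ≤ S t + p t) := by
  obtain ⟨σ, hσ, hσno⟩ := exists_consecutive_placement s fun t _ => hp t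
  have hself : rearranged p S s T0 σ T0 = S T0 := rearranged_of_le hT0 le_rfl
  have hwindow : ∀ t ∈ s, rearranged p S s T0 σ T0 - ∑ u ∈ s, p u ≤ rearranged p S s T0 σ t ∧
      rearranged p S s T0 σ t + p t ≤ rearranged p S s T0 σ T0 := by
    rw [hself]
    exact fun t ht => rearranged_mem_window hσ ht
  refine ⟨rearranged p S s T0 σ, rearranged_nonneg hp hnonoverlap hS0 hshuffle hσ,
    pairwise_noOverlap_rearranged hp hnonoverlap hshuffle hσ hσno, by rw [hself], hwindow,
    fun t ht => (hwindow t ht).2, fun t ht => ?_⟩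
  linarith [rearranged_le (S := S) (T0 := T0) (σ := σ) hp ht]

/-- Given a single-processor nonpreemptive schedule containing a Reduce task T0 and
a set s of Shuffle tasks that must complete before T0 starts, there is a modified
feasible schedule keeping the completion time of T0 fixed, in which the tasks of s
are executed consecutively and end exactly when T0 starts, and where the completion
time of every task outside s weakly decreases. -/
theorem shuffle_rearrangement (T : Type*) [Fintype T] [DecidableEq T]
    (p : T → ℝ) (hp : ∀ t, 0 ≤ p t)
    (T0 : T) (s : Finset T) (hT0 : T0 ∉ s)
    (S : T → ℝ) (hS0 : ∀ t, 0 ≤ S t)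
    (hnonoverlap : ∀ t1 t2, t1 ≠ t2 → S t1 + p t1 ≤ S t2 ∨ S t2 + p t2 ≤ S t1)
    -- each Shuffle task of T0 completes before T0 starts
    (hshuffle : ∀ t ∈ s, S t + p t ≤ S T0) :
    ∃ S' : T → ℝ,
      (∀ t, 0 ≤ S' t) ∧
      (∀ t1 t2, t1 ≠ t2 → S' t1 + p t1 ≤ S' t2 ∨ S' t2 + p t2 ≤ S' t1) ∧
      -- the completion time of T0 is kept fixed
      S' T0 + p T0 = S T0 + p T0 ∧
      -- the Shuffle tasks of s run consecutively, ending exactly when T0 starts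
      (∀ t ∈ s, S' T0 - (∑ u ∈ s, p u) ≤ S' t ∧ S' t + p t ≤ S' T0) ∧
      (∀ t ∈ s, S' t + p t ≤ S' T0) ∧
      -- every other task's completion time weakly decreases
      (∀ t, t ∉ s → S' t + p t ≤ S t + p t) :=
  shuffle_rearrangement_general T p hp T0 s hT0 S hS0 hnonoverlap hshuffle
end

section
/- Replacing, for each Reduce task T_{r,j}, its processing time p_{i,r,j} on each Reduce processor i by p'_{i,r,j} = p_{i,r,j} + Σ_{shuffle tasks in s_j^r} t_{r,k,j} yields an instance without Shuffle tasks whose optimal total weighted completion time equals that of the original Shuffle-plus-Reduce instance (where Shuffle tasks run on the same processor as and before their Reduce task). -/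
/-!
Merging: on each processor, run the merged tasks back to back in the order of the
original Reduce completion times. All Shuffle and Reduce work of the tasks finishing by
time `C` occupies pairwise disjoint intervals inside `[0, C]`, so it has total length at
most `C`; hence every merged task finishes no later than its Reduce task did.
Splitting: a merged task occupying `[S, S + q + p]` is expanded into its Shuffle tasks run
back to back in `[S, S + q]`, followed by the Reduce task, with the same completion time.
-/

open Finset MeasureTheory

def NonOverlapping (a₁ d₁ a₂ d₂ : ℝ) : Prop :=
  a₁ + d₁ ≤ a₂ ∨ a₂ + d₂ ≤ a₁

namespace NonOverlapping

variable {a₁ d₁ a₂ d₂ : ℝ}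

theorem const_add (h : NonOverlapping a₁ d₁ a₂ d₂) (x : ℝ) :
    NonOverlapping (x + a₁) d₁ (x + a₂) d₂ := by
  unfold NonOverlapping at *
  rcases h with h | h
  · exact Or.inl (by linarith)
  · exact Or.inr (by linarith)

theorem mono (h : NonOverlapping a₁ d₁ a₂ d₂) {b₁ e₁ b₂ e₂ : ℝ}
    (h₁ : a₁ ≤ b₁) (h₁' : b₁ + e₁ ≤ a₁ + d₁) (h₂ : a₂ ≤ b₂) (h₂' : b₂ + e₂ ≤ a₂ + d₂) :
    NonOverlapping b₁ e₁ b₂ e₂ := by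
  rcases h with h | h
  · exact Or.inl (by linarith)
  · exact Or.inr (by linarith)

theorem disjoint_Ioc (h : NonOverlapping a₁ d₁ a₂ d₂) :
    Disjoint (Set.Ioc a₁ (a₁ + d₁)) (Set.Ioc a₂ (a₂ + d₂)) := by
  rcases h with h | h
  · exact Set.Ioc_disjoint_Ioc_of_le h
  · exact (Set.Ioc_disjoint_Ioc_of_le h).symm

end NonOverlapping

theorem sum_le_of_pairwise_nonOverlapping {ι : Type*} (t : Finset ι) (a f : ι → ℝ) {L M : ℝ}
    (hLM : L ≤ M) (hf : ∀ i ∈ t, 0 ≤ f i) (ha : ∀ i ∈ t, L ≤ a i)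
    (hM : ∀ i ∈ t, a i + f i ≤ M)
    (hd : (t : Set ι).Pairwise fun i j => NonOverlapping (a i) (f i) (a j) (f j)) :
    ∑ i ∈ t, f i ≤ M - L := by
  have hvol : ENNReal.ofReal (∑ i ∈ t, f i) ≤ ENNReal.ofReal (M - L) :=
    calc ENNReal.ofReal (∑ i ∈ t, f i)
        = ∑ i ∈ t, volume (Set.Ioc (a i) (a i + f i)) := by
          simp only [ENNReal.ofReal_sum_of_nonneg hf, Real.volume_Ioc, add_sub_cancel_left]
      _ = volume (⋃ i ∈ t, Set.Ioc (a i) (a i + f i)) :=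
          (measure_biUnion_finset (fun i hi j hj hij => (hd hi hj hij).disjoint_Ioc)
            fun i _ => measurableSet_Ioc).symm
      _ ≤ volume (Set.Ioc L M) :=
          measure_mono (Set.iUnion₂_subset fun i hi => Set.Ioc_subset_Ioc (ha i hi) (hM i hi))
      _ = ENNReal.ofReal (M - L) := Real.volume_Ioc
  exact (ENNReal.ofReal_le_ofReal_iff (sub_nonneg.mpr hLM)).mp hvol

section ListSchedule

variable {κ P β : Type*} [Fintype κ] [DecidableEq P] [LinearOrder β]
  (M : κ → P) (key : κ → β) (D : κ → ℝ)

def listStart (k : κ) : ℝ :=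
  ∑ k' ∈ univ.filter (fun k' => M k' = M k ∧ key k' < key k), D k'

variable {M key D}

theorem listStart_nonneg (hD : ∀ k, 0 ≤ D k) (k : κ) : 0 ≤ listStart M key D k :=
  sum_nonneg fun k' _ => hD k'

theorem listStart_add_le_sum (hD : ∀ k, 0 ≤ D k) {k : κ} {s : Finset κ}
    (hs : ∀ k', M k' = M k → key k' ≤ key k → k' ∈ s) :
    listStart M key D k + D k ≤ ∑ k' ∈ s, D k' := by
  classical
  have hk : k ∉ univ.filter (fun k' => M k' = M k ∧ key k' < key k) := by simp
  calc listStart M key D k + D k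
      = ∑ k' ∈ insert k (univ.filter (fun k' => M k' = M k ∧ key k' < key k)), D k' := by
        rw [sum_insert hk, add_comm]; rfl
    _ ≤ ∑ k' ∈ s, D k' := by
        refine sum_le_sum_of_subset_of_nonneg ?_ fun k' _ _ => hD k'
        intro k' hk'
        simp only [mem_insert, mem_filter, mem_univ, true_and] at hk'
        rcases hk' with rfl | ⟨hM, hlt⟩
        · exact hs k' rfl le_rfl
        · exact hs k' hM hlt.le

theorem listStart_add_le_listStart (hD : ∀ k, 0 ≤ D k) {k₁ k₂ : κ} (hM : M k₁ = M k₂)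
    (hlt : key k₁ < key k₂) : listStart M key D k₁ + D k₁ ≤ listStart M key D k₂ :=
  listStart_add_le_sum hD fun k' hM' hle => by
    simpa [hM'.trans hM] using hle.trans_lt hlt

theorem listStart_nonOverlapping (hD : ∀ k, 0 ≤ D k) (hkey : Function.Injective key)
    {k₁ k₂ : κ} (hne : k₁ ≠ k₂) (hM : M k₁ = M k₂) :
    NonOverlapping (listStart M key D k₁) (D k₁) (listStart M key D k₂) (D k₂) := by
  rcases lt_or_gt_of_ne (hkey.ne hne) with hlt | hlt
  · exact Or.inl (listStart_add_le_listStart hD hM hlt)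
  · exact Or.inr (listStart_add_le_listStart hD hM.symm hlt)

end ListSchedule

theorem exists_merged_schedule {ι κ P : Type*} [Fintype ι] [Fintype κ] [DecidableEq κ]
    (g : ι → κ) (M : κ → P) (S d : ι → ℝ) (c D : κ → ℝ)
    (hS : ∀ i, 0 ≤ S i) (hd : ∀ i, 0 ≤ d i)
    (hdisj : ∀ i j, i ≠ j → M (g i) = M (g j) → NonOverlapping (S i) (d i) (S j) (d j))
    (hc : ∀ i, S i + d i ≤ c (g i)) (hc0 : ∀ k, 0 ≤ c k)
    (hD : ∀ k, D k = ∑ i ∈ univ.filter (fun i => g i = k), d i) :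
    ∃ T : κ → ℝ, (∀ k, 0 ≤ T k) ∧
      (∀ k₁ k₂, k₁ ≠ k₂ → M k₁ = M k₂ → NonOverlapping (T k₁) (D k₁) (T k₂) (D k₂)) ∧
      ∀ k, T k + D k ≤ c k := by
  classical
  let key : κ → Lex (ℝ × Fin (Fintype.card κ)) := fun k => toLex (c k, Fintype.equivFin κ k)
  have hkey : Function.Injective key := fun k k' h =>
    (Fintype.equivFin κ).injective (congrArg Prod.snd (toLex.injective h))
  have hD0 : ∀ k, 0 ≤ D k := fun k => hD k ▸ sum_nonneg fun i _ => hd i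
  refine ⟨listStart M key D, listStart_nonneg hD0,
    fun k₁ k₂ hne hM => listStart_nonOverlapping hD0 hkey hne hM, fun k => ?_⟩
  calc listStart M key D k + D k
      ≤ ∑ k' ∈ univ.filter (fun k' => M k' = M k ∧ c k' ≤ c k), D k' :=
        listStart_add_le_sum hD0 fun k' hM hle => by
          simpa [hM] using (Prod.Lex.toLex_le_toLex.mp hle).elim le_of_lt (·.1.le)
    _ = ∑ i ∈ univ.filter (fun i => M (g i) = M k ∧ c (g i) ≤ c k), d i := by
        simp only [hD, sum_fiberwise_eq_sum_filter, mem_filter, mem_univ, true_and]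
    _ ≤ c k - 0 := by
        refine sum_le_of_pairwise_nonOverlapping _ S d (hc0 k) (fun i _ => hd i)
          (fun i _ => hS i) (fun i hi => ?_) fun i hi j hj hij => ?_
        · exact (hc i).trans (mem_filter.mp hi).2.2
        · exact hdisj i j hij ((mem_filter.mp hi).2.1.trans (mem_filter.mp hj).2.1.symm)
    _ = c k := sub_zero _

theorem exists_blockwise_layout {ι κ : Type*} [Fintype ι] [DecidableEq κ] (g : ι → κ)
    (d : ι → ℝ) (hd : ∀ i, 0 ≤ d i) (T : κ → ℝ) :
    ∃ S : ι → ℝ, (∀ i, T (g i) ≤ S i) ∧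
      (∀ i, S i + d i ≤ T (g i) + ∑ j ∈ univ.filter (fun j => g j = g i), d j) ∧
      ∀ i j, i ≠ j → g i = g j → NonOverlapping (S i) (d i) (S j) (d j) := by
  let key := Fintype.equivFin ι
  refine ⟨fun i => T (g i) + listStart g key d i,
    fun i => le_add_of_nonneg_right (listStart_nonneg hd i), fun i => ?_, fun i j hne hg => ?_⟩
  · rw [add_assoc]
    gcongr
    exact listStart_add_le_sum hd fun j hg _ => by simpa using hg
  · simpa only [hg] using (listStart_nonOverlapping hd key.injective hne hg).const_add (T (g j))

theorem sum_filter_sumElim_eq {α β M : Type*} [Fintype α] [Fintype β] [DecidableEq α]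
    [AddCommMonoid M] (h : β → α) (f : α → M) (f' : β → M) (a : α) :
    ∑ i ∈ univ.filter (fun i => Sum.elim id h i = a), Sum.elim f f' i
      = f a + ∑ b ∈ univ.filter (fun b => h b = a), f' b := by
  rw [sum_filter, sum_filter, Fintype.sum_sum_type]
  exact congrArg (· + _) (Fintype.sum_ite_eq' a f)

theorem absorb_shuffle_optima_general
    (R Sh P : Type*) [Fintype R] [Fintype Sh] [DecidableEq R]
    (owner : Sh → R)                 -- the Reduce task of each Shuffle task
    (p : P → R → ℝ) (hp : ∀ i r, 0 ≤ p i r)      -- Reduce processing times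
    (tt : Sh → ℝ) (htt : ∀ s, 0 ≤ tt s)          -- Shuffle transfer times
    (q : R → ℝ)
    (hq : ∀ r, q r = ∑ s ∈ Finset.univ.filter (fun s => owner s = r), tt s)
    (w : R → ℝ) (hw : ∀ r, 0 ≤ w r)              -- weights
    (V : ℝ) :
    -- original instance: Reduce tasks and Shuffle tasks, Shuffle tasks on the same
    -- processor as their Reduce task, completing before it starts
    (∃ (A : R → P) (SR : R → ℝ) (SS : Sh → ℝ),
      (∀ r, 0 ≤ SR r) ∧ (∀ s, 0 ≤ SS s) ∧
      -- no two Reduce tasks overlap on a common processor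
      (∀ r1 r2, r1 ≠ r2 → A r1 = A r2 →
        SR r1 + p (A r1) r1 ≤ SR r2 ∨ SR r2 + p (A r2) r2 ≤ SR r1) ∧
      -- no two Shuffle tasks overlap on a common processor
      (∀ s1 s2, s1 ≠ s2 → A (owner s1) = A (owner s2) →
        SS s1 + tt s1 ≤ SS s2 ∨ SS s2 + tt s2 ≤ SS s1) ∧
      -- Shuffle and Reduce tasks on a common processor do not overlap
      (∀ s r, A (owner s) = A r →
        SS s + tt s ≤ SR r ∨ SR r + p (A r) r ≤ SS s) ∧
      -- each Shuffle task completes before its Reduce task starts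
      (∀ s, SS s + tt s ≤ SR (owner s)) ∧
      ∑ r, w r * (SR r + p (A r) r) ≤ V)
    ↔
    -- merged instance: Reduce tasks with processing times p' = p + q only
    (∃ (A : R → P) (S : R → ℝ),
      (∀ r, 0 ≤ S r) ∧
      (∀ r1 r2, r1 ≠ r2 → A r1 = A r2 →
        S r1 + (p (A r1) r1 + q r1) ≤ S r2 ∨
        S r2 + (p (A r2) r2 + q r2) ≤ S r1) ∧
      ∑ r, w r * (S r + (p (A r) r + q r)) ≤ V) := by
  have hq0 : ∀ r, 0 ≤ q r := fun r => hq r ▸ sum_nonneg fun s _ => htt s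
  constructor
  · rintro ⟨A, SR, SS, hSR0, hSS0, hRR, hSS, hSR, hbefore, hobj⟩
    obtain ⟨T, hT0, hTdisj, hTc⟩ := exists_merged_schedule (Sum.elim id owner) A
      (Sum.elim SR SS) (Sum.elim (fun r => p (A r) r) tt) (fun r => SR r + p (A r) r)
      (fun r => p (A r) r + q r) (by rintro (r | s) <;> simp [hSR0, hSS0])
      (by rintro (r | s) <;> simp [hp, htt])
      (by
        rintro (r₁ | s₁) (r₂ | s₂) hne hA
        · exact hRR r₁ r₂ (by simpa using hne) hA
        · exact (hSR s₂ r₁ hA.symm).symm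
        · exact hSR s₁ r₂ hA
        · exact hSS s₁ s₂ (by simpa using hne) hA)
      (by rintro (r | s); exacts [le_rfl, (hbefore s).trans (le_add_of_nonneg_right (hp _ _))])
      (fun r => add_nonneg (hSR0 r) (hp _ _)) (fun r => by rw [sum_filter_sumElim_eq, hq])
    exact ⟨A, T, hT0, hTdisj,
      (sum_le_sum fun r _ => mul_le_mul_of_nonneg_left (hTc r) (hw r)).trans hobj⟩
  · rintro ⟨A, S, hS0, hRR, hobj⟩
    obtain ⟨SS, hSS_lo, hSS_hi, hSS⟩ := exists_blockwise_layout owner tt htt S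
    simp only [← hq] at hSS_hi
    have hSS_in : ∀ s, SS s + tt s ≤ S (owner s) + (p (A (owner s)) (owner s) + q (owner s)) :=
      fun s => by linarith [hSS_hi s, hp (A (owner s)) (owner s)]
    refine ⟨A, fun r => S r + q r, SS, fun r => add_nonneg (hS0 r) (hq0 r),
      fun s => (hS0 _).trans (hSS_lo s), fun r₁ r₂ hne hA => ?_, fun s₁ s₂ hne hA => ?_,
      fun s r hA => ?_, hSS_hi, (le_of_eq (sum_congr rfl fun r _ => by ring)).trans hobj⟩
    · exact NonOverlapping.mono (hRR r₁ r₂ hne hA) (by linarith [hq0 r₁]) (by linarith)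
        (by linarith [hq0 r₂]) (by linarith)
    · by_cases hown : owner s₁ = owner s₂
      · exact hSS s₁ s₂ hne hown
      · exact NonOverlapping.mono (hRR _ _ hown hA) (hSS_lo s₁) (hSS_in s₁)
          (hSS_lo s₂) (hSS_in s₂)
    · by_cases hown : owner s = r
      · exact Or.inl (hown ▸ hSS_hi s)
      · exact NonOverlapping.mono (hRR _ _ hown hA) (hSS_lo s) (hSS_in s)
          (by linarith [hq0 r]) (by linarith)

/-- Absorbing the Shuffle tasks into their Reduce tasks (increasing each Reduce
processing time p(i,r) by the total transfer time of its Shuffle tasks) yields an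
instance without Shuffle tasks whose optimal total weighted completion time equals
that of the original Shuffle-plus-Reduce instance, where each Shuffle task runs on
the same processor as, and completes before, its Reduce task.  Equality of optima
is expressed by: for every value V, some feasible original schedule has objective
at most V iff some feasible merged schedule has objective at most V. -/
theorem absorb_shuffle_optima
    (R Sh P : Type*) [Fintype R] [Fintype Sh] [DecidableEq R] [DecidableEq P]
    (owner : Sh → R)                 -- the Reduce task of each Shuffle task
    (p : P → R → ℝ) (hp : ∀ i r, 0 ≤ p i r)      -- Reduce processing times
    (tt : Sh → ℝ) (htt : ∀ s, 0 ≤ tt s)          -- Shuffle transfer times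
    (q : R → ℝ)
    (hq : ∀ r, q r = ∑ s ∈ Finset.univ.filter (fun s => owner s = r), tt s)
    (w : R → ℝ) (hw : ∀ r, 0 ≤ w r)              -- weights
    (V : ℝ) :
    -- original instance: Reduce tasks and Shuffle tasks, Shuffle tasks on the same
    -- processor as their Reduce task, completing before it starts
    (∃ (A : R → P) (SR : R → ℝ) (SS : Sh → ℝ),
      (∀ r, 0 ≤ SR r) ∧ (∀ s, 0 ≤ SS s) ∧
      -- no two Reduce tasks overlap on a common processor
      (∀ r1 r2, r1 ≠ r2 → A r1 = A r2 →
        SR r1 + p (A r1) r1 ≤ SR r2 ∨ SR r2 + p (A r2) r2 ≤ SR r1) ∧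
      -- no two Shuffle tasks overlap on a common processor
      (∀ s1 s2, s1 ≠ s2 → A (owner s1) = A (owner s2) →
        SS s1 + tt s1 ≤ SS s2 ∨ SS s2 + tt s2 ≤ SS s1) ∧
      -- Shuffle and Reduce tasks on a common processor do not overlap
      (∀ s r, A (owner s) = A r →
        SS s + tt s ≤ SR r ∨ SR r + p (A r) r ≤ SS s) ∧
      -- each Shuffle task completes before its Reduce task starts
      (∀ s, SS s + tt s ≤ SR (owner s)) ∧
      ∑ r, w r * (SR r + p (A r) r) ≤ V)
    ↔
    -- merged instance: Reduce tasks with processing times p' = p + q only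
    (∃ (A : R → P) (S : R → ℝ),
      (∀ r, 0 ≤ S r) ∧
      (∀ r1 r2, r1 ≠ r2 → A r1 = A r2 →
        S r1 + (p (A r1) r1 + q r1) ≤ S r2 ∨
        S r2 + (p (A r2) r2 + q r2) ≤ S r1) ∧
      ∑ r, w r * (S r + (p (A r) r + q r)) ≤ V) :=
  absorb_shuffle_optima_general R Sh P owner p hp tt htt q hq w hw V
end

section
/- In the no-idle single-processor Reduce scheduling where each task of width ω is released at time ω and the processor always runs an available task of minimum width, and every set of tasks with width at most ω has total processing time at most ω on this processor, every task of width ω completes by time 2ω. -/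
/-! Between the release `ω t₀` and the start `S t₀` of a task, the processor is always running
some other task of width at most `ω t₀`, so by comparing Lebesgue measures the waiting time
`S t₀ - ω t₀` is at most the total processing time of those tasks. Adding `p t₀` and using the
volume hypothesis gives `S t₀ + p t₀ ≤ ω t₀ + ω t₀`. -/

open Finset MeasureTheory

theorem sub_le_sum_of_Ico_subset_biUnion {ι : Type*} (s : Finset ι) {a b : ℝ} (x ℓ : ι → ℝ)
    (hℓ : ∀ i ∈ s, 0 ≤ ℓ i) (hcover : Set.Ico a b ⊆ ⋃ i ∈ s, Set.Ico (x i) (x i + ℓ i)) :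
    b - a ≤ ∑ i ∈ s, ℓ i := by
  have hmeas : ENNReal.ofReal (b - a) ≤ ENNReal.ofReal (∑ i ∈ s, ℓ i) :=
    calc ENNReal.ofReal (b - a) = volume (Set.Ico a b) := Real.volume_Ico.symm
      _ ≤ ∑ i ∈ s, volume (Set.Ico (x i) (x i + ℓ i)) :=
        (measure_mono hcover).trans (measure_biUnion_finset_le s _)
      _ = ∑ i ∈ s, ENNReal.ofReal (ℓ i) := by simp only [Real.volume_Ico, add_sub_cancel_left]
      _ = ENNReal.ofReal (∑ i ∈ s, ℓ i) := (ENNReal.ofReal_sum_of_nonneg hℓ).symm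
  exact (ENNReal.ofReal_le_ofReal_iff (sum_nonneg hℓ)).mp hmeas

theorem start_sub_release_le_sum_erase {T : Type*} [Fintype T] [DecidableEq T] (ω p S : T → ℝ)
    (hp : ∀ t, 0 ≤ p t)
    (hbusy : ∀ (t0 : T) (x : ℝ), ω t0 ≤ x → x < S t0 →
      ∃ t', ω t' ≤ ω t0 ∧ S t' ≤ x ∧ x < S t' + p t')
    (t0 : T) :
    S t0 - ω t0 ≤ ∑ t' ∈ (univ.filter (fun t' => ω t' ≤ ω t0)).erase t0, p t' := by
  refine sub_le_sum_of_Ico_subset_biUnion _ S p (fun t' _ => hp t') ?_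
  rintro x ⟨hreleased, hwaiting⟩
  obtain ⟨t', hwidth, hstart, hend⟩ := hbusy t0 x hreleased hwaiting
  have hne : t' ≠ t0 := by
    rintro rfl
    exact hwaiting.not_ge hstart
  simp only [Set.mem_iUnion]
  exact ⟨t', by simp [hne, hwidth], hstart, hend⟩

theorem reduce_width_bound_general (T : Type*) [Fintype T]
    (ω p S : T → ℝ)
    (hp : ∀ t, 0 ≤ p t)
    -- no idle + minimum-width-first: at any time between the release ω t0 and the
    -- start of t0, some task of width at most ω t0 is being processed
    (hbusy : ∀ (t0 : T) (x : ℝ), ω t0 ≤ x → x < S t0 →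
      ∃ t', ω t' ≤ ω t0 ∧ S t' ≤ x ∧ x < S t' + p t')
    (hvol : ∀ t0 : T,
      ∑ t' ∈ Finset.univ.filter (fun t' => ω t' ≤ ω t0), p t' ≤ ω t0) :
    ∀ t0 : T, S t0 + p t0 ≤ 2 * ω t0 := by
  classical
  intro t0
  have hwait := start_sub_release_le_sum_erase ω p S hp hbusy t0
  have hsplit := add_sum_erase (univ.filter (fun t' => ω t' ≤ ω t0)) p (a := t0) (by simp)
  linarith [hvol t0]

/-- Reduce-side volume argument: each task of width ω is released at time ω, and the
processor, whenever free, runs an available task of minimum width (so between a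
task's release and its start the processor is busy with tasks of width no larger).
If the total processing time of tasks of width at most ω is at most ω, then every
task of width ω completes by time 2ω. -/
theorem reduce_width_bound (T : Type*) [Fintype T]
    (ω p S : T → ℝ)
    (hp : ∀ t, 0 ≤ p t)
    -- each task of width ω is released at time ω
    (hrel : ∀ t, ω t ≤ S t)
    (hnonoverlap : ∀ t1 t2, t1 ≠ t2 → S t1 + p t1 ≤ S t2 ∨ S t2 + p t2 ≤ S t1)
    -- no idle + minimum-width-first: at any time between the release ω t0 and the
    -- start of t0, some task of width at most ω t0 is being processed
    (hbusy : ∀ (t0 : T) (x : ℝ), ω t0 ≤ x → x < S t0 →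
      ∃ t', ω t' ≤ ω t0 ∧ S t' ≤ x ∧ x < S t' + p t')
    (hvol : ∀ t0 : T,
      ∑ t' ∈ Finset.univ.filter (fun t' => ω t' ≤ ω t0), p t' ≤ ω t0) :
    ∀ t0 : T, S t0 + p t0 ≤ 2 * ω t0 :=
  reduce_width_bound_general T ω p S hp hbusy hvol
end
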